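/- There exists a prime P such that for every prime p ≥ P, the number of gaps equal to 30 in the cycle of gaps 𝒢(p#) exceeds the number of gaps equal to 6 in 𝒢(p#): N_p(30) > N_p(6). -/

import Mathlib

open Finset

/-- `b` is the next totative of `P` after `a`: `a < b`, `b` is coprime to `P`,
and no integer strictly between `a` and `b` is coprime to `P`. -/
def IsNextTot (P a b : ℕ) : Prop :=
  a < b ∧ Nat.Coprime b P ∧ ∀ x, a < x → x < b → ¬ Nat.Coprime x P

/-- Starting at `r`, the successive totatives of `P` after `r` occur at the
successive partial sums of the list of gaps `c`. -/
def MatchesGaps (P : ℕ) : ℕ → List ℕ → Prop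
  | _, [] => True
  | r, c :: cs => IsNextTot P r (r + c) ∧ MatchesGaps P (r + c) cs

open scoped Classical in
/-- `Ncount p s` : the number of (cyclic) occurrences of the constellation `s`
in the cycle of gaps `𝒢(p#)`.  Since the pattern of coprimality to `p#` is
periodic with period `p#`, this is the number of totatives `r ∈ [1, p#]` of `p#`
at which the gap pattern `s` begins. -/
noncomputable def Ncount (p : ℕ) (s : List ℕ) : ℕ :=
  ((Finset.Icc 1 (primorial p)).filter
    (fun r => Nat.Coprime r (primorial p) ∧ MatchesGaps (primorial p) r s)).card

open scoped Classical in
/-- `nCount p g j` : the number of (cyclic) occurrences in `𝒢(p#)` of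
constellations of length `j` with sum `g` (the driving terms of length `j`
for the gap `g`). -/
noncomputable def nCount (p g j : ℕ) : ℕ :=
  ((Finset.Icc 1 (primorial p)).filter
    (fun r => Nat.Coprime r (primorial p) ∧
      ∃ c : List ℕ, c.length = j ∧ c.sum = g ∧ MatchesGaps (primorial p) r c)).card

/-!
For `p ≥ 30` put `A = ∏ (q - 2)` and `B = ∏ (q - 3)` over the primes `31 ≤ q ≤ p`. By the
Chinese remainder theorem the number of `r` modulo `p#` for which every `r + h`, `h ∈ H`, is a
totative is multiplicative over the primes, and a prime `q > max H` contributes `q - #H`. Every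
gap `6` starts a pair of totatives `(r, r + 6)`, so `N_p(6) ≤ 429417450 A`. A pair of totatives
`(r, r + 30)` is a gap `30` unless some `r + 2k` with `0 < k < 15` is a totative, so
`N_p(30) ≥ 572556600 A - 2249461760 B`. Finally `A / B = ∏ (1 + 1/(q - 3)) ≥ 1 + ∑ 1/q`, which
tends to infinity with `p` since the prime reciprocals diverge, while
`16 (572556600 - 429417450) > 2249461760`.
-/

open Filter

def admissibleCount (n : ℕ) (H : Finset ℕ) : ℕ :=
  #{r ∈ Icc 1 n | ∀ h ∈ H, (r + h).Coprime n}

lemma admissibleCount_eq_natCard (n : ℕ) [NeZero n] (H : Finset ℕ) :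
    admissibleCount n H = Nat.card {x : ZMod n // ∀ h ∈ H, IsUnit (x + h)} := by
  classical
  rw [Nat.card_eq_fintype_card, Fintype.card_subtype, admissibleCount]
  have hunit : ∀ (r h : ℕ), IsUnit ((r : ZMod n) + h) ↔ (r + h).Coprime n := fun r h => by
    rw [← Nat.cast_add, ZMod.isUnit_iff_coprime]
  refine card_nbij' (fun r => (r : ZMod n)) (fun x => (x - 1).val + 1) ?_ ?_ ?_ ?_
  · intro r hr
    simp only [mem_coe, mem_filter, mem_univ, true_and] at hr ⊢
    exact fun h hh => (hunit r h).2 (hr.2 h hh)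
  · intro x hx
    simp only [mem_coe, mem_filter, mem_univ, true_and, mem_Icc] at hx ⊢
    have hcast : (((x - 1).val + 1 : ℕ) : ZMod n) = x := by
      push_cast [ZMod.natCast_zmod_val]; ring
    refine ⟨⟨by omega, (ZMod.val_lt _)⟩, fun h hh => ?_⟩
    rw [← hunit, hcast]
    exact hx h hh
  · intro r hr
    simp only [mem_coe, mem_filter, mem_Icc] at hr
    have hpred : (r : ZMod n) - 1 = ((r - 1 : ℕ) : ZMod n) := by rw [Nat.cast_sub hr.1.1]; simp
    simp only [hpred, ZMod.val_natCast_of_lt (show r - 1 < n by omega)]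
    omega
  · intro x _
    simp only [Nat.cast_add, ZMod.natCast_zmod_val, Nat.cast_one, sub_add_cancel]

lemma admissibleCount_mul {m n : ℕ} (hmn : m.Coprime n) (H : Finset ℕ) :
    admissibleCount (m * n) H = admissibleCount m H * admissibleCount n H := by
  rcases eq_or_ne m 0 with rfl | hm
  · simp [admissibleCount]
  rcases eq_or_ne n 0 with rfl | hn
  · simp [admissibleCount]
  have := NeZero.mk hm
  have := NeZero.mk hn
  rw [admissibleCount_eq_natCard, admissibleCount_eq_natCard, admissibleCount_eq_natCard,
    ← Nat.card_prod]
  let e := ZMod.chineseRemainder hmn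
  refine Nat.card_congr
    ((e.toEquiv.subtypeEquiv fun x => ?_).trans (Equiv.subtypeProdEquivProd ..))
  simp only [← forall_and]
  refine forall₂_congr fun h _ => ?_
  rw [← isUnit_map_iff e, map_add, map_natCast, Prod.isUnit_iff]
  rfl

lemma admissibleCount_prime {q : ℕ} (hq : q.Prime) {H : Finset ℕ} (hH : ∀ h ∈ H, h < q) :
    admissibleCount q H = q - #H := by
  classical
  have := Fact.mk hq
  rw [admissibleCount_eq_natCard]
  let roots := H.image fun h : ℕ => -(h : ZMod q)
  have hroots : #roots = #H := card_image_of_injOn fun a ha b hb hab => by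
    have := congrArg ZMod.val (neg_injective hab)
    rwa [ZMod.val_natCast_of_lt (hH a ha), ZMod.val_natCast_of_lt (hH b hb)] at this
  have hunit : ∀ x : ZMod q, (∀ h ∈ H, IsUnit (x + h)) ↔ x ∉ roots := fun x => by
    simp only [roots, mem_image, not_exists, not_and, isUnit_iff_ne_zero, ne_eq]
    exact forall₂_congr fun h _ => by rw [neg_eq_iff_add_eq_zero, add_comm, eq_comm]
  rw [Nat.card_congr (Equiv.subtypeEquivRight hunit), Nat.card_eq_fintype_card,
    Fintype.card_subtype_compl, Fintype.card_coe, ZMod.card, hroots]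

lemma admissibleCount_prod_primes {Q : Finset ℕ} (hQ : ∀ q ∈ Q, q.Prime) (H : Finset ℕ) :
    admissibleCount (∏ q ∈ Q, q) H = ∏ q ∈ Q, admissibleCount q H := by
  induction Q using Finset.induction_on with
  | empty => simp [admissibleCount]
  | insert a s ha ih =>
    have hs : ∀ q ∈ s, q.Prime := fun q hq => hQ q (mem_insert_of_mem hq)
    have hcop : a.Coprime (∏ q ∈ s, q) := Nat.Coprime.prod_right fun q hq =>
      (Nat.coprime_primes (hQ a (mem_insert_self a s)) (hs q hq)).2 fun h => ha (h ▸ hq)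
    rw [prod_insert ha, prod_insert ha, admissibleCount_mul hcop, ih hs]

lemma admissibleCount_primorial (n : ℕ) (H : Finset ℕ) :
    admissibleCount (primorial n) H = ∏ q ∈ Nat.primesLE n, admissibleCount q H :=
  admissibleCount_prod_primes (fun _ hq => Nat.prime_of_mem_primesLE hq) H

lemma admissibleCount_primorial_of_le {m n : ℕ} (hmn : m ≤ n) {H : Finset ℕ}
    (hH : ∀ h ∈ H, h ≤ m) :
    admissibleCount (primorial n) H =
      admissibleCount (primorial m) H * ∏ q ∈ Ico (m + 1) (n + 1) with q.Prime, (q - #H) := by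
  obtain ⟨k, rfl⟩ := Nat.exists_eq_add_of_le hmn
  have hbig : ∀ q ∈ {q ∈ Ico (m + 1) (m + k + 1) | q.Prime}, q.Prime ∧ m < q := fun q hq => by
    simp only [mem_filter, mem_Ico] at hq
    exact ⟨hq.2, by omega⟩
  have hcop : (primorial m).Coprime (∏ q ∈ Ico (m + 1) (m + k + 1) with q.Prime, q) :=
    Nat.Coprime.prod_right fun q hq => Nat.Coprime.symm <|
      (Nat.Prime.coprime_iff_not_dvd (hbig q hq).1).2 fun hdvd =>
        absurd ((hbig q hq).1.dvd_primorial_iff.1 hdvd) (not_le.2 (hbig q hq).2)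
  rw [primorial_add, admissibleCount_mul hcop,
    admissibleCount_prod_primes fun q hq => (hbig q hq).1]
  exact congrArg _ (prod_congr rfl fun q hq =>
    admissibleCount_prime (hbig q hq).1 fun h hh => (hH h hh).trans_lt (hbig q hq).2)

lemma isNextTot_add_two_mul {M r n : ℕ} (hM : 2 ∣ M) (hn : 0 < n) (hr : r.Coprime M)
    (hrn : (r + 2 * n).Coprime M) (hk : ∀ k ∈ Ioo 0 n, ¬ (r + 2 * k).Coprime M) :
    IsNextTot M r (r + 2 * n) := by
  have hodd : ∀ x, x.Coprime M → x % 2 = 1 := fun x hx =>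
    Nat.odd_iff.1 (Nat.coprime_two_right.1 (hx.coprime_dvd_right hM))
  refine ⟨by omega, hrn, fun x hrx hxn hx => ?_⟩
  have := hodd r hr
  have := hodd x hx
  refine hk ((x - r) / 2) (mem_Ioo.2 ⟨by omega, by omega⟩) ?_
  rwa [show r + 2 * ((x - r) / 2) = x by omega]

lemma Ncount_singleton_le (p g : ℕ) : Ncount p [g] ≤ admissibleCount (primorial p) {0, g} := by
  classical
  refine card_le_card (monotone_filter_right _ fun r _ hr => ?_)
  simp only [MatchesGaps, IsNextTot] at hr
  simp only [mem_insert, mem_singleton, forall_eq_or_imp, forall_eq, add_zero]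
  exact ⟨hr.1, hr.2.1.2.1⟩

lemma admissibleCount_le_Ncount_add {p n : ℕ} (hp : 2 ≤ p) (hn : 0 < n) :
    admissibleCount (primorial p) {0, 2 * n} ≤
      Ncount p [2 * n] + ∑ k ∈ Ioo 0 n, admissibleCount (primorial p) {0, 2 * k, 2 * n} := by
  classical
  have h2 : 2 ∣ primorial p := Nat.prime_two.dvd_primorial_iff.2 hp
  refine (card_le_card fun r hr => ?_).trans
    ((card_union_le _ _).trans (Nat.add_le_add_left card_biUnion_le _))
  simp only [mem_filter, mem_insert, mem_singleton, forall_eq_or_imp, forall_eq, add_zero] at hr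
  obtain ⟨hIcc, hr, hrn⟩ := hr
  simp only [mem_union, mem_filter, mem_biUnion, mem_insert, mem_singleton, forall_eq_or_imp,
    forall_eq, add_zero, MatchesGaps, and_true]
  by_cases hk : ∃ k ∈ Ioo 0 n, (r + 2 * k).Coprime (primorial p)
  · obtain ⟨k, hk, hrk⟩ := hk
    exact Or.inr ⟨k, hk, hIcc, hr, hrk, hrn⟩
  · push Not at hk
    exact Or.inl ⟨hIcc, hr, isNextTot_add_two_mul h2 hn hr hrn hk⟩

lemma one_add_sum_le_prod_one_add {ι R : Type*} [CommSemiring R] [PartialOrder R]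
    [IsOrderedRing R] (s : Finset ι) {f : ι → R} (hf : ∀ i ∈ s, 0 ≤ f i) :
    1 + ∑ i ∈ s, f i ≤ ∏ i ∈ s, (1 + f i) := by
  classical
  induction s using Finset.induction_on with
  | empty => simp
  | insert a s ha ih =>
    have hfa := hf a (mem_insert_self a s)
    have hs := fun i hi => hf i (mem_insert_of_mem hi)
    rw [sum_insert ha, prod_insert ha]
    calc 1 + (f a + ∑ i ∈ s, f i) ≤ 1 + (f a + ∑ i ∈ s, f i) + f a * ∑ i ∈ s, f i :=
          le_add_of_nonneg_right (mul_nonneg hfa (sum_nonneg hs))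
      _ = (1 + f a) * (1 + ∑ i ∈ s, f i) := by ring
      _ ≤ (1 + f a) * ∏ i ∈ s, (1 + f i) :=
          mul_le_mul_of_nonneg_left (ih hs) (add_nonneg zero_le_one hfa)

lemma one_add_sum_inv_mul_prod_sub_three_le {ι : Type*} (s : Finset ι) {x : ι → ℝ}
    (hx : ∀ i ∈ s, 3 < x i) :
    (1 + ∑ i ∈ s, (x i)⁻¹) * ∏ i ∈ s, (x i - 3) ≤ ∏ i ∈ s, (x i - 2) := by
  have hpos : ∀ i ∈ s, 0 < x i - 3 := fun i hi => sub_pos.2 (hx i hi)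
  have hprod : 0 ≤ ∏ i ∈ s, (x i - 3) := prod_nonneg fun i hi => (hpos i hi).le
  calc (1 + ∑ i ∈ s, (x i)⁻¹) * ∏ i ∈ s, (x i - 3)
      ≤ (1 + ∑ i ∈ s, (x i - 3)⁻¹) * ∏ i ∈ s, (x i - 3) := by
        gcongr with i hi
        · exact hpos i hi
        · linarith
    _ ≤ (∏ i ∈ s, (1 + (x i - 3)⁻¹)) * ∏ i ∈ s, (x i - 3) := by
        gcongr
        exact one_add_sum_le_prod_one_add s fun i hi => (inv_pos.2 (hpos i hi)).le
    _ = ∏ i ∈ s, (x i - 2) := by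
        rw [← prod_mul_distrib]
        refine prod_congr rfl fun i hi => ?_
        field_simp [(hpos i hi).ne']
        ring

lemma mul_prod_sub_three_le_prod_sub_two {s : Finset ℕ} (hs : ∀ q ∈ s, 3 < q) {C : ℕ}
    (hC : (C : ℝ) ≤ 1 + ∑ q ∈ s, (q : ℝ)⁻¹) :
    C * ∏ q ∈ s, (q - 3) ≤ ∏ q ∈ s, (q - 2) := by
  have hcast : ∀ c ≤ 3, ((∏ q ∈ s, (q - c) : ℕ) : ℝ) = ∏ q ∈ s, ((q : ℝ) - c) := fun c hc => by
    rw [Nat.cast_prod]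
    exact prod_congr rfl fun q hq => Nat.cast_sub (by have := hs q hq; omega)
  have hprod : 0 ≤ ∏ q ∈ s, ((q : ℝ) - 3) :=
    prod_nonneg fun q hq => sub_nonneg.2 (by exact_mod_cast (hs q hq).le)
  rw [← Nat.cast_le (α := ℝ), Nat.cast_mul, hcast 3 le_rfl, hcast 2 (by norm_num)]
  push_cast
  calc (C : ℝ) * ∏ q ∈ s, ((q : ℝ) - 3)
      ≤ (1 + ∑ q ∈ s, (q : ℝ)⁻¹) * ∏ q ∈ s, ((q : ℝ) - 3) := by gcongr
    _ ≤ ∏ q ∈ s, ((q : ℝ) - 2) :=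
        one_add_sum_inv_mul_prod_sub_three_le s fun q hq => by exact_mod_cast hs q hq

lemma tendsto_sum_inv_primes_Ico (a : ℕ) :
    Tendsto (fun n => ∑ q ∈ Ico a n with q.Prime, (q : ℝ)⁻¹) atTop atTop := by
  let f := Set.indicator {p : ℕ | p.Prime} fun n : ℕ => (1 : ℝ) / n
  have hf : ¬ Summable fun k => f (k + a) :=
    (summable_nat_add_iff a).not.2 not_summable_one_div_on_primes
  rw [← tendsto_add_atTop_iff_nat a]
  refine ((not_summable_iff_tendsto_nat_atTop_of_nonneg fun k => ?_).1 hf).congr fun N => ?_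
  · exact Set.indicator_nonneg (fun n _ => by positivity) _
  · rw [sum_filter, sum_Ico_eq_sum_range, Nat.add_sub_cancel]
    refine sum_congr rfl fun k _ => ?_
    simp [f, Set.indicator, add_comm]

lemma Ncount_six_le {p : ℕ} (hp : 30 ≤ p) :
    Ncount p [6] ≤ 429417450 * ∏ q ∈ Ico 31 (p + 1) with q.Prime, (q - 2) := by
  have hsmall : admissibleCount (primorial 30) {0, 6} = 429417450 := by
    rw [admissibleCount_primorial]; decide
  calc Ncount p [6] ≤ admissibleCount (primorial p) {0, 6} := Ncount_singleton_le p 6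
    _ = _ := by
      rw [admissibleCount_primorial_of_le hp (by decide), hsmall]
      rfl

lemma le_Ncount_thirty {p : ℕ} (hp : 30 ≤ p) :
    572556600 * ∏ q ∈ Ico 31 (p + 1) with q.Prime, (q - 2) ≤
      Ncount p [30] + 2249461760 * ∏ q ∈ Ico 31 (p + 1) with q.Prime, (q - 3) := by
  have hsmall : admissibleCount (primorial 30) {0, 30} = 572556600 := by
    rw [admissibleCount_primorial]; decide
  have hsmallTriples :
      ∑ k ∈ Ioo 0 15, admissibleCount (primorial 30) {0, 2 * k, 30} = 2249461760 := by
    simp only [admissibleCount_primorial]; decide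
  have hcard : ∀ k ∈ Ioo 0 15, #({0, 2 * k, 30} : Finset ℕ) = 3 := by decide
  have htriple : ∀ k ∈ Ioo 0 15, admissibleCount (primorial p) {0, 2 * k, 30} =
      admissibleCount (primorial 30) {0, 2 * k, 30} *
        ∏ q ∈ Ico 31 (p + 1) with q.Prime, (q - 3) := fun k hk => by
    have hk' := mem_Ioo.1 hk
    rw [admissibleCount_primorial_of_le hp (by simp; omega), hcard k hk]
  calc 572556600 * ∏ q ∈ Ico 31 (p + 1) with q.Prime, (q - 2)
      = admissibleCount (primorial p) {0, 2 * 15} := by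
        rw [admissibleCount_primorial_of_le hp (by decide), hsmall]
        rfl
    _ ≤ Ncount p [2 * 15] + ∑ k ∈ Ioo 0 15, admissibleCount (primorial p) {0, 2 * k, 2 * 15} :=
        admissibleCount_le_Ncount_add (by omega) (by norm_num)
    _ = _ := by rw [sum_congr rfl htriple, ← sum_mul, hsmallTriples]

theorem thirty_eventually_beats_six :
    ∃ P : ℕ, P.Prime ∧ ∀ p : ℕ, p.Prime → P ≤ p → Ncount p [6] < Ncount p [30] := by
  obtain ⟨N, hN⟩ := eventually_atTop.1 ((tendsto_sum_inv_primes_Ico 31).eventually_ge_atTop 15)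
  obtain ⟨P, hNP, hP⟩ := Nat.exists_infinite_primes (N + 30)
  refine ⟨P, hP, fun p _ hPp => ?_⟩
  have hp : 30 ≤ p := by omega
  have h6 := Ncount_six_le hp
  have h30 := le_Ncount_thirty hp
  set S := {q ∈ Ico 31 (p + 1) | q.Prime}
  have hbig : ∀ q ∈ S, 3 < q := fun q hq => by
    have := (mem_Ico.1 (mem_filter.1 hq).1).1
    omega
  have hpos : 0 < ∏ q ∈ S, (q - 2) := prod_pos fun q hq => by have := hbig q hq; omega
  have hratio : 16 * ∏ q ∈ S, (q - 3) ≤ ∏ q ∈ S, (q - 2) :=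
    mul_prod_sub_three_le_prod_sub_two hbig (by push_cast; linarith [hN (p + 1) (by omega)])
  omega
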